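/- There is no 4-way latin square of order 8 with exactly 44 fixed cells, i.e., 44 ∉ I⁴[8]. -/

import Mathlib

/-- A μ-way latin square of order n: μ latin squares on symbols `Fin n` such that
in every cell the μ entries are all equal or pairwise distinct. -/
def IsMuWayLatinSquare {μ n : ℕ} (L : Fin μ → Fin n → Fin n → Fin n) : Prop :=
  (∀ m i, Function.Injective (L m i)) ∧
  (∀ m j, Function.Injective (fun i => L m i j)) ∧
  (∀ i j, (∀ a b, L a i j = L b i j) ∨ Function.Injective (fun a => L a i j))

/-- A cell is fixed when the μ entries there coincide. -/
def IsFixedCell {μ n : ℕ} (L : Fin μ → Fin n → Fin n → Fin n) (i j : Fin n) : Prop :=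
  ∀ a b, L a i j = L b i j

instance {μ n : ℕ} (L : Fin μ → Fin n → Fin n → Fin n) (i j : Fin n) :
    Decidable (IsFixedCell L i j) :=
  inferInstanceAs (Decidable (∀ a b, L a i j = L b i j))

/-- The number of fixed cells. -/
def numFixed {μ n : ℕ} (L : Fin μ → Fin n → Fin n → Fin n) : ℕ :=
  (Finset.univ.filter fun p : Fin n × Fin n => IsFixedCell L p.1 p.2).card

/-- The number of fixed cells in row `i`. -/
def rowFixed {μ n : ℕ} (L : Fin μ → Fin n → Fin n → Fin n) (i : Fin n) : ℕ :=
  (Finset.univ.filter fun j : Fin n => IsFixedCell L i j).card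

/-- The intersection spectrum `I^μ[n]`. -/
def Spectrum (μ n : ℕ) : Set ℕ :=
  {k | ∃ L : Fin μ → Fin n → Fin n → Fin n, IsMuWayLatinSquare L ∧ numFixed L = k}

/-!
The non-fixed cells (the trade) meet every row, column and symbol of the first square that they
meet at least `μ` times. With `μ = 4` and 20 trade cells, the trade lies in an `R × C` subarray
with `|R|, |C| ≤ 5` and `|R| |C| ≥ 20`, and uses at most 5 symbols of the first square. Each of
the at least 3 other symbols occurs once in every row of `R`, at most `8 - |C|` times outside
`C`, so it fills at least `|R| + |C| - 8` cells of `R × C`, all of them fixed. But `R × C` has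
only `|R| |C| - 20` fixed cells, too few in each of the cases `4 × 5`, `5 × 4`, `5 × 5`.
-/

open Finset Function

lemma card_add_card_le_add_card_filter_prod {n : ℕ} (M : Fin n → Fin n → Fin n)
    (hrow : ∀ i, Injective (M i)) (hcol : ∀ j, Injective fun i => M i j)
    (R C : Finset (Fin n)) (f : Fin n) :
    #R + #C ≤ n + #{p ∈ R ×ˢ C | M p.1 p.2 = f} := by
  choose col hcol_eq using fun i => Finite.surjective_of_injective (hrow i) f
  have hcol_inj : Injective col := fun i i' h =>
    hcol (col i) (show M i (col i) = M i' (col i) by rw [hcol_eq i, h, hcol_eq i'])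
  have hin : #{i ∈ R | col i ∈ C} ≤ #{p ∈ R ×ˢ C | M p.1 p.2 = f} :=
    card_le_card_of_injOn (fun i => (i, col i))
      (fun i hi => mem_filter.mpr
        ⟨mem_product.mpr ⟨(mem_filter.mp hi).1, (mem_filter.mp hi).2⟩, hcol_eq i⟩)
      (fun i _ i' _ h => congrArg Prod.fst h)
  have hout : #{i ∈ R | col i ∉ C} ≤ #Cᶜ :=
    card_le_card_of_injOn col
      (fun i hi => mem_compl.mpr (mem_filter.mp hi).2)
      hcol_inj.injOn
  have hsplit := card_filter_add_card_filter_not (s := R) (fun i => col i ∈ C)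
  rw [card_compl, Fintype.card_fin] at hout
  have hC : #C ≤ n := by simpa using card_le_univ C
  omega

section Trade

variable {μ n : ℕ} {L : Fin μ → Fin n → Fin n → Fin n}

def tradeCells (L : Fin μ → Fin n → Fin n → Fin n) : Finset (Fin n × Fin n) :=
  {p | ¬ IsFixedCell L p.1 p.2}

lemma mem_tradeCells {p : Fin n × Fin n} : p ∈ tradeCells L ↔ ¬ IsFixedCell L p.1 p.2 := by
  simp [tradeCells]

lemma numFixed_add_card_tradeCells (L : Fin μ → Fin n → Fin n → Fin n) :
    numFixed L + #(tradeCells L) = n * n := by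
  rw [numFixed, tradeCells, card_filter_add_card_filter_not, card_univ, Fintype.card_prod,
    Fintype.card_fin]

namespace IsMuWayLatinSquare

lemma eq_of_isFixedCell_of_row (hL : IsMuWayLatinSquare L) {i j j' : Fin n} {a b : Fin μ}
    (hfix : IsFixedCell L i j) (h : L a i j = L b i j') : j = j' :=
  hL.1 b i ((hfix b a).trans h)

lemma eq_of_isFixedCell_of_col (hL : IsMuWayLatinSquare L) {i i' j : Fin n} {a b : Fin μ}
    (hfix : IsFixedCell L i j) (h : L a i j = L b i' j) : i = i' :=
  hL.2.1 b j ((hfix b a).trans h)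

lemma injective_of_not_isFixedCell (hL : IsMuWayLatinSquare L) {i j : Fin n}
    (h : ¬ IsFixedCell L i j) : Injective fun a => L a i j :=
  (hL.2.2 i j).resolve_left h

/-- The `μ` distinct entries of a trade cell reappear in one layer of its row, at trade cells. -/
lemma le_card_tradeCells_row (hL : IsMuWayLatinSquare L) {p : Fin n × Fin n}
    (hp : p ∈ tradeCells L) : μ ≤ #{q ∈ tradeCells L | q.1 = p.1} := by
  obtain ⟨i, j₀⟩ := p
  rw [mem_tradeCells] at hp
  obtain ⟨m, -⟩ := not_forall.mp hp
  choose col hcol using fun a => Finite.surjective_of_injective (hL.1 m i) (L a i j₀)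
  have htrade : ∀ a, ¬ IsFixedCell L i (col a) := fun a hfix =>
    hp (hL.eq_of_isFixedCell_of_row hfix (hcol a) ▸ hfix)
  simpa using card_le_card_of_injOn (s := univ) (fun a => (i, col a))
    (fun a _ => by simpa [mem_tradeCells] using htrade a)
    (fun a _ b _ h => hL.injective_of_not_isFixedCell hp <| by
      simpa only [hcol] using congrArg (L m i) (Prod.ext_iff.mp h).2)

lemma le_card_tradeCells_col (hL : IsMuWayLatinSquare L) {p : Fin n × Fin n}
    (hp : p ∈ tradeCells L) : μ ≤ #{q ∈ tradeCells L | q.2 = p.2} := by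
  obtain ⟨i₀, j⟩ := p
  rw [mem_tradeCells] at hp
  obtain ⟨m, -⟩ := not_forall.mp hp
  choose row hrow using fun a => Finite.surjective_of_injective (hL.2.1 m j) (L a i₀ j)
  have htrade : ∀ a, ¬ IsFixedCell L (row a) j := fun a hfix =>
    hp (hL.eq_of_isFixedCell_of_col hfix (hrow a) ▸ hfix)
  simpa using card_le_card_of_injOn (s := univ) (fun a => (row a, j))
    (fun a _ => by simpa [mem_tradeCells] using htrade a)
    (fun a _ b _ h => hL.injective_of_not_isFixedCell hp <| by
      simpa only [hrow] using congrArg (fun i => L m i j) (Prod.ext_iff.mp h).1)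

/-- The symbol occurs in each layer `a` at a trade cell of the same row, and from there in
layer `m` at a trade cell of that column; these cells lie in distinct columns. -/
lemma le_card_tradeCells_symbol (hL : IsMuWayLatinSquare L) (m : Fin μ) {p : Fin n × Fin n}
    (hp : p ∈ tradeCells L) : μ ≤ #{q ∈ tradeCells L | L m q.1 q.2 = L m p.1 p.2} := by
  obtain ⟨i, j₀⟩ := p
  rw [mem_tradeCells] at hp
  choose col hcol using fun a => Finite.surjective_of_injective (hL.1 a i) (L m i j₀)
  choose row hrow using fun a =>
    Finite.surjective_of_injective (hL.2.1 m (col a)) (L m i j₀)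
  have htrade : ∀ a, ¬ IsFixedCell L i (col a) := fun a hfix =>
    hp (hL.eq_of_isFixedCell_of_row hfix (hcol a) ▸ hfix)
  have htrade' : ∀ a, ¬ IsFixedCell L (row a) (col a) := fun a hfix =>
    htrade a (hL.eq_of_isFixedCell_of_col hfix ((hrow a).trans (hcol a).symm) ▸ hfix)
  simpa using card_le_card_of_injOn (s := univ) (fun a => (row a, col a))
    (fun a _ => by simpa [mem_tradeCells] using ⟨htrade' a, hrow a⟩)
    (fun a _ b _ h => by
      have hab : col a = col b := congrArg Prod.snd h
      exact hL.injective_of_not_isFixedCell (htrade a) <|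
        show L a i (col a) = L b i (col a) by rw [hcol a, hab, hcol b])

/-- Each symbol of layer `m` missing from the trade fills at least `|R| + |C| - n` cells of
`R × C`, all of them fixed. -/
lemma card_compl_image_mul_add_card_tradeCells_le (hL : IsMuWayLatinSquare L) (m : Fin μ)
    {R C : Finset (Fin n)} (hRC : tradeCells L ⊆ R ×ˢ C) :
    #((tradeCells L).image fun p => L m p.1 p.2)ᶜ * (#R + #C) + #(tradeCells L) ≤
      #((tradeCells L).image fun p => L m p.1 p.2)ᶜ * n + #R * #C := by
  set U := (tradeCells L).image fun p => L m p.1 p.2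
  have hsum :
      ∑ f ∈ Uᶜ, #{p ∈ R ×ˢ C | L m p.1 p.2 = f} = #{p ∈ R ×ˢ C | L m p.1 p.2 ∈ Uᶜ} :=
    sum_card_fiberwise_eq_card_filter _ _ _
  have hdisj : Disjoint {p ∈ R ×ˢ C | L m p.1 p.2 ∈ Uᶜ} (tradeCells L) :=
    disjoint_left.mpr fun p hp hpT =>
      mem_compl.mp (mem_filter.mp hp).2 (mem_image_of_mem _ hpT)
  have hfixed : #{p ∈ R ×ˢ C | L m p.1 p.2 ∈ Uᶜ} + #(tradeCells L) ≤ #R * #C := by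
    rw [← card_union_of_disjoint hdisj, ← card_product]
    exact card_le_card (union_subset (filter_subset _ _) hRC)
  calc #Uᶜ * (#R + #C) + #(tradeCells L)
      = ∑ _f ∈ Uᶜ, (#R + #C) + #(tradeCells L) := by rw [sum_const, smul_eq_mul]
    _ ≤ ∑ f ∈ Uᶜ, (n + #{p ∈ R ×ˢ C | L m p.1 p.2 = f}) + #(tradeCells L) :=
        Nat.add_le_add_right (sum_le_sum fun f _ =>
          card_add_card_le_add_card_filter_prod _ (hL.1 m) (hL.2.1 m) R C f) _
    _ ≤ #Uᶜ * n + #R * #C := by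
        rw [sum_add_distrib, sum_const, smul_eq_mul, hsum]
        omega

end IsMuWayLatinSquare

end Trade

theorem stmt_16 : (44 : ℕ) ∉ Spectrum 4 8 := by
  rintro ⟨L, hL, hfixed⟩
  have hT : #(tradeCells L) = 20 := by
    have := numFixed_add_card_tradeCells L
    omega
  have hcount := hL.card_compl_image_mul_add_card_tradeCells_le 0 subset_product
  rw [card_compl, Fintype.card_fin] at hcount
  set T := tradeCells L
  have hR : 4 * #(T.image Prod.fst) ≤ #T :=
    mul_card_image_le_card _ _ (forall_mem_image.mpr fun _ hp => hL.le_card_tradeCells_row hp)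
  have hC : 4 * #(T.image Prod.snd) ≤ #T :=
    mul_card_image_le_card _ _ (forall_mem_image.mpr fun _ hp => hL.le_card_tradeCells_col hp)
  have hU : 4 * #(T.image fun p => L 0 p.1 p.2) ≤ #T :=
    mul_card_image_le_card _ _ (forall_mem_image.mpr fun _ hp => hL.le_card_tradeCells_symbol 0 hp)
  have hRC : #T ≤ #(T.image Prod.fst) * #(T.image Prod.snd) :=
    (card_le_card subset_product).trans (card_product _ _).le
  have hR5 : #(T.image Prod.fst) ≤ 5 := by omega
  have hC5 : #(T.image Prod.snd) ≤ 5 := by omega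
  interval_cases #(T.image Prod.fst) <;> interval_cases #(T.image Prod.snd) <;> omega
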